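/- arXiv:1109.6426 — 2 statements merged into one kernel-verified Lean document; each statement's English description precedes it below -/
import Mathlib

section
/- Let (λ₁, x₁) with ‖x₁‖ = 1 be an eigenpair of the quadratic pencil, i.e., (λ₁²M + λ₁D + K)x₁ = 0, with λ₁ ≠ 0. Let Q have orthonormal columns, [Q, Q⊥] be unitary, q₁ = Qᴴx₁ ≠ 0, q̂₁ = q₁/‖q₁‖, and set M̂ = QᴴMQ, D̂ = QᴴDQ, K̂ = QᴴKQ. Then the residual r₁ = (λ₁²M̂ + λ₁D̂ + K̂)q̂₁ satisfies ‖r₁‖ ≤ (|λ₁|²‖M‖ + |λ₁|‖D‖ + ‖K‖) tan θ₁, where sin θ₁ = ‖(Q⊥)ᴴx₁‖ and cos θ₁ = ‖q₁‖. -/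
open Matrix Polynomial

/-- Euclidean norm of a complex vector. -/
noncomputable def vnorm {ι : Type*} [Fintype ι] (x : ι → ℂ) : ℝ :=
  Real.sqrt (∑ i, ‖x i‖ ^ 2)

/-- Spectral norm (operator 2-norm) of a complex matrix. -/
noncomputable def spec {ι κ : Type*} [Fintype ι] [Fintype κ] [DecidableEq κ]
    (A : Matrix ι κ ℂ) : ℝ :=
  ‖LinearMap.toContinuousLinearMap (Matrix.toEuclideanLin A)‖

/-- Sine of the angle between two vectors: distance from a/‖a‖ to span{b}. -/
noncomputable def sAngle {ι : Type*} [Fintype ι] (a b : ι → ℂ) : ℝ :=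
  ⨅ α : ℂ, vnorm ((vnorm a)⁻¹ • a - α • b)

/-! With `P = λ₁²M + λ₁D + K`, the identity `Q Qᴴ + Qp Qpᴴ = 1` splits `x₁` and, since `P x₁ = 0`,
turns the projected residual into `(Qᴴ P Q)(Qᴴ x₁) = -Qᴴ P Qp (Qpᴴ x₁)`. As `Qᴴ` is a contraction
and `Qp` an isometry, its norm is at most `‖P‖ ‖Qpᴴ x₁‖ = ‖P‖ sin θ₁`; normalising `Qᴴ x₁`
divides by `‖Qᴴ x₁‖ = cos θ₁`, and `‖P‖ ≤ |λ₁|²‖M‖ + |λ₁|‖D‖ + ‖K‖`. -/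

section vnorm

variable {ι κ : Type*} [Fintype ι] [Fintype κ]

lemma vnorm_nonneg (x : ι → ℂ) : 0 ≤ vnorm x := Real.sqrt_nonneg _

lemma vnorm_eq_norm_toLp (x : ι → ℂ) : vnorm x = ‖WithLp.toLp 2 x‖ := by
  rw [EuclideanSpace.norm_eq]; rfl

lemma vnorm_sq_eq_re_dotProduct (x : ι → ℂ) : vnorm x ^ 2 = (star x ⬝ᵥ x).re := by
  rw [vnorm, Real.sq_sqrt (by positivity), dotProduct, Complex.re_sum]
  refine Finset.sum_congr rfl fun i _ => ?_
  simp [Complex.mul_re, Complex.sq_norm, Complex.normSq_apply]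

lemma vnorm_real_smul (c : ℝ) (x : ι → ℂ) : vnorm (c • x) = |c| * vnorm x := by
  simp only [vnorm_eq_norm_toLp]
  rw [WithLp.toLp_smul, norm_smul, Real.norm_eq_abs]

lemma vnorm_neg (x : ι → ℂ) : vnorm (-x) = vnorm x := by
  simp [vnorm]

lemma vnorm_mulVec_of_conjTranspose_mul_self [DecidableEq κ] {A : Matrix ι κ ℂ}
    (hA : Aᴴ * A = 1) (v : κ → ℂ) : vnorm (A *ᵥ v) = vnorm v := by
  have h : vnorm (A *ᵥ v) ^ 2 = vnorm v ^ 2 := by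
    simp only [vnorm_sq_eq_re_dotProduct]
    rw [star_mulVec, dotProduct_mulVec, vecMul_vecMul, hA, vecMul_one]
  exact (pow_left_inj₀ (vnorm_nonneg _) (vnorm_nonneg _) two_ne_zero).mp h

lemma vnorm_sq_add_vnorm_sq {κ' : Type*} [Fintype κ'] [DecidableEq ι]
    {A : Matrix ι κ ℂ} {B : Matrix ι κ' ℂ} (h : A * Aᴴ + B * Bᴴ = 1) (y : ι → ℂ) :
    vnorm (Aᴴ *ᵥ y) ^ 2 + vnorm (Bᴴ *ᵥ y) ^ 2 = vnorm y ^ 2 := by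
  simp only [vnorm_sq_eq_re_dotProduct]
  rw [star_mulVec, star_mulVec, dotProduct_mulVec, dotProduct_mulVec, vecMul_vecMul,
    vecMul_vecMul, conjTranspose_conjTranspose, conjTranspose_conjTranspose, ← Complex.add_re,
    ← add_dotProduct, ← vecMul_add, h, vecMul_one]

lemma vnorm_conjTranspose_mulVec_le {κ' : Type*} [Fintype κ'] [DecidableEq ι]
    {A : Matrix ι κ ℂ} {B : Matrix ι κ' ℂ} (h : A * Aᴴ + B * Bᴴ = 1) (y : ι → ℂ) :
    vnorm (Aᴴ *ᵥ y) ≤ vnorm y := by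
  refine (pow_le_pow_iff_left₀ (vnorm_nonneg _) (vnorm_nonneg _) two_ne_zero).mp ?_
  rw [← vnorm_sq_add_vnorm_sq h y]
  exact le_add_of_nonneg_right (sq_nonneg _)

end vnorm

section spec

variable {ι κ : Type*} [Fintype ι] [Fintype κ] [DecidableEq κ]

lemma vnorm_mulVec_le (A : Matrix ι κ ℂ) (v : κ → ℂ) : vnorm (A *ᵥ v) ≤ spec A * vnorm v := by
  simpa [vnorm_eq_norm_toLp, spec] using
    (LinearMap.toContinuousLinearMap (toEuclideanLin A)).le_opNorm (WithLp.toLp 2 v)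

lemma spec_add_le (A B : Matrix ι κ ℂ) : spec (A + B) ≤ spec A + spec B := by
  simp only [spec, map_add]
  exact norm_add_le _ _

lemma spec_smul (c : ℂ) (A : Matrix ι κ ℂ) : spec (c • A) = ‖c‖ * spec A := by
  simp only [spec, _root_.map_smul]
  exact norm_smul c _

lemma spec_quadratic_le (lam : ℂ) (M D K : Matrix ι κ ℂ) :
    spec (lam ^ 2 • M + lam • D + K) ≤ ‖lam‖ ^ 2 * spec M + ‖lam‖ * spec D + spec K := by
  calc spec (lam ^ 2 • M + lam • D + K)
      ≤ spec (lam ^ 2 • M) + spec (lam • D) + spec K := by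
        grw [spec_add_le, spec_add_le]
    _ = ‖lam‖ ^ 2 * spec M + ‖lam‖ * spec D + spec K := by
        rw [spec_smul, spec_smul, norm_pow]

end spec

section compression

variable {ι κ κ' : Type*}

lemma mul_conjTranspose_add_of_fromCols [Fintype κ] [Fintype κ'] [DecidableEq ι]
    {Q : Matrix ι κ ℂ} {Qp : Matrix ι κ' ℂ}
    (hU : fromCols Q Qp * (fromCols Q Qp)ᴴ = 1) : Q * Qᴴ + Qp * Qpᴴ = 1 := by
  rwa [conjTranspose_fromCols_eq_fromRows_conjTranspose, fromCols_mul_fromRows] at hU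

lemma conjTranspose_mul_self_right_of_fromCols [Fintype ι] [DecidableEq κ] [DecidableEq κ']
    {Q : Matrix ι κ ℂ} {Qp : Matrix ι κ' ℂ}
    (hU : (fromCols Q Qp)ᴴ * fromCols Q Qp = 1) : Qpᴴ * Qp = 1 := by
  rw [conjTranspose_fromCols_eq_fromRows_conjTranspose, fromRows_mul_fromCols,
    ← fromBlocks_one, fromBlocks_inj] at hU
  exact hU.2.2.2

lemma vnorm_compression_mulVec_le [Fintype ι] [Fintype κ] [Fintype κ'] [DecidableEq ι]
    [DecidableEq κ'] {Q : Matrix ι κ ℂ} {Qp : Matrix ι κ' ℂ}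
    (hproj : Q * Qᴴ + Qp * Qpᴴ = 1) (hQp : Qpᴴ * Qp = 1) {P : Matrix ι ι ℂ} {x : ι → ℂ}
    (hx : P *ᵥ x = 0) :
    vnorm ((Qᴴ * P * Q) *ᵥ (Qᴴ *ᵥ x)) ≤ spec P * vnorm (Qpᴴ *ᵥ x) := by
  have hsplit : Q *ᵥ (Qᴴ *ᵥ x) = x - Qp *ᵥ (Qpᴴ *ᵥ x) := by
    rw [eq_sub_iff_add_eq, mulVec_mulVec, mulVec_mulVec, ← add_mulVec, hproj, one_mulVec]
  have hresidual :
      (Qᴴ * P * Q) *ᵥ (Qᴴ *ᵥ x) = -(Qᴴ *ᵥ (P *ᵥ (Qp *ᵥ (Qpᴴ *ᵥ x)))) := by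
    rw [← mulVec_mulVec, ← mulVec_mulVec, hsplit, mulVec_sub, hx, zero_sub, mulVec_neg]
  calc vnorm ((Qᴴ * P * Q) *ᵥ (Qᴴ *ᵥ x))
      ≤ vnorm (P *ᵥ (Qp *ᵥ (Qpᴴ *ᵥ x))) := by
        rw [hresidual, vnorm_neg]
        exact vnorm_conjTranspose_mulVec_le hproj _
    _ ≤ spec P * vnorm (Qp *ᵥ (Qpᴴ *ᵥ x)) := vnorm_mulVec_le _ _
    _ = spec P * vnorm (Qpᴴ *ᵥ x) := by rw [vnorm_mulVec_of_conjTranspose_mul_self hQp]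

end compression

theorem stmt2_general {n m : ℕ} (M D K : Matrix (Fin n) (Fin n) ℂ)
    (Q : Matrix (Fin n) (Fin m) ℂ) (Qp : Matrix (Fin n) (Fin (n - m)) ℂ)
    (hU1 : (Matrix.fromCols Q Qp)ᴴ * Matrix.fromCols Q Qp = 1)
    (hU2 : Matrix.fromCols Q Qp * (Matrix.fromCols Q Qp)ᴴ = 1)
    (lam : ℂ) (x : Fin n → ℂ)
    (heig : (lam ^ 2 • M + lam • D + K) *ᵥ x = 0) :
    vnorm ((lam ^ 2 • (Qᴴ * M * Q) + lam • (Qᴴ * D * Q) + Qᴴ * K * Q) *ᵥ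
        ((vnorm (Qᴴ *ᵥ x))⁻¹ • (Qᴴ *ᵥ x)))
      ≤ (‖lam‖ ^ 2 * spec M + ‖lam‖ * spec D + spec K) *
        (vnorm (Qpᴴ *ᵥ x) / vnorm (Qᴴ *ᵥ x)) := by
  have hred : lam ^ 2 • (Qᴴ * M * Q) + lam • (Qᴴ * D * Q) + Qᴴ * K * Q
      = Qᴴ * (lam ^ 2 • M + lam • D + K) * Q := by
    simp only [Matrix.mul_add, Matrix.add_mul, Matrix.mul_smul, Matrix.smul_mul]
  have hcore := vnorm_compression_mulVec_le (mul_conjTranspose_add_of_fromCols hU2)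
    (conjTranspose_mul_self_right_of_fromCols hU1) heig
  rw [hred, mulVec_smul, vnorm_real_smul, abs_inv, abs_of_nonneg (vnorm_nonneg _),
    div_eq_inv_mul, mul_left_comm]
  refine mul_le_mul_of_nonneg_left (hcore.trans ?_) (inv_nonneg.2 (vnorm_nonneg _))
  exact mul_le_mul_of_nonneg_right (spec_quadratic_le lam M D K) (vnorm_nonneg _)

theorem stmt2 {n m : ℕ} (M D K : Matrix (Fin n) (Fin n) ℂ)
    (Q : Matrix (Fin n) (Fin m) ℂ) (Qp : Matrix (Fin n) (Fin (n - m)) ℂ)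
    (hQ : Qᴴ * Q = 1)
    (hU1 : (Matrix.fromCols Q Qp)ᴴ * Matrix.fromCols Q Qp = 1)
    (hU2 : Matrix.fromCols Q Qp * (Matrix.fromCols Q Qp)ᴴ = 1)
    (lam : ℂ) (x : Fin n → ℂ) (hx : vnorm x = 1) (hlam : lam ≠ 0)
    (heig : (lam ^ 2 • M + lam • D + K) *ᵥ x = 0)
    (hq : Qᴴ *ᵥ x ≠ 0) :
    vnorm ((lam ^ 2 • (Qᴴ * M * Q) + lam • (Qᴴ * D * Q) + Qᴴ * K * Q) *ᵥ
        ((vnorm (Qᴴ *ᵥ x))⁻¹ • (Qᴴ *ᵥ x)))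
      ≤ (‖lam‖ ^ 2 * spec M + ‖lam‖ * spec D + spec K) *
        (vnorm (Qpᴴ *ᵥ x) / vnorm (Qᴴ *ᵥ x)) :=
  stmt2_general M D K Q Qp hU1 hU2 lam x heig
end

section
/- Elsner's theorem: let C, C̃ ∈ ℂ^{n×n}. For every eigenvalue λ of C there exists an eigenvalue λ̃ of C̃ such that |λ − λ̃| ≤ (‖C‖ + ‖C̃‖)^{1 − 1/n} · ‖C − C̃‖^{1/n}, where ‖·‖ is the spectral norm. -/
/-!
Let `C z = λ z` with `‖z‖ = 1`. Then `(C̃ - λ) z = (C̃ - C) z` and `|λ| ≤ ‖C‖`. The modulus of the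
determinant of any matrix `M` is the product of its singular values; the smallest one is at most
`‖M z‖` and every one is at most `‖M‖`. Hence
`|det (C̃ - λ)| ≤ ‖C - C̃‖ (‖C‖ + ‖C̃‖)^(n-1)`. On the other hand `|det (C̃ - λ)|` is the product of
the distances from `λ` to the `n` eigenvalues of `C̃`, so it is at least the `n`-th power of the
smallest one.
-/

open Matrix Polynomial

open Module
open scoped Matrix.Norms.L2Operator

namespace LinearMap

variable {𝕜 E F : Type*} [RCLike 𝕜] [NormedAddCommGroup E] [InnerProductSpace 𝕜 E]
  [FiniteDimensional 𝕜 E] [NormedAddCommGroup F] [InnerProductSpace 𝕜 F] [FiniteDimensional 𝕜 F]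
  (T : E →ₗ[𝕜] F)

theorem re_inner_adjoint_comp_self_apply (x : E) :
    RCLike.re (inner 𝕜 x ((adjoint T ∘ₗ T) x)) = ‖T x‖ ^ 2 := by
  rw [comp_apply, adjoint_inner_right, inner_self_eq_norm_sq]

theorem singularValues_le_opNorm (i : ℕ) :
    T.singularValues i ≤ ‖T.toContinuousLinearMap‖ := by
  rcases lt_or_ge i (finrank 𝕜 E) with hi | hi
  · set hT := T.isSymmetric_adjoint_comp_self
    set v := hT.eigenvectorBasis rfl ⟨i, hi⟩
    have hv : ‖v‖ = 1 := (hT.eigenvectorBasis rfl).orthonormal.1 _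
    have hsq : T.singularValues i ^ 2 = ‖T v‖ ^ 2 := by
      rw [T.sq_singularValues_of_lt rfl hi, ← re_inner_adjoint_comp_self_apply,
        hT.apply_eigenvectorBasis, inner_smul_right, inner_self_eq_norm_sq_to_K, hv]
      simp
    rw [← pow_le_pow_iff_left₀ (T.singularValues_nonneg i) (norm_nonneg _) two_ne_zero, hsq]
    gcongr
    simpa [hv] using T.toContinuousLinearMap.le_opNorm v
  · rw [T.singularValues_of_finrank_le hi]
    positivity

theorem singularValues_finrank_sub_one_mul_norm_le (x : E) :
    T.singularValues (finrank 𝕜 E - 1) * ‖x‖ ≤ ‖T x‖ := by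
  rcases Nat.eq_zero_or_pos (finrank 𝕜 E) with h0 | hpos
  · rw [T.singularValues_of_finrank_le (by omega), zero_mul]
    positivity
  set hT := T.isSymmetric_adjoint_comp_self
  set b := hT.eigenvectorBasis rfl
  set μ := hT.eigenvalues rfl
  have hμ : ∀ i, μ ⟨finrank 𝕜 E - 1, by omega⟩ ≤ μ i :=
    fun i => hT.eigenvalues_antitone rfl (Fin.le_iff_val_le_val.mpr (Nat.le_sub_one_of_lt i.isLt))
  have hx : ‖x‖ ^ 2 = ∑ i, ‖b.repr x i‖ ^ 2 := by
    rw [← b.repr.norm_map, EuclideanSpace.norm_sq_eq]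
  have hTx : ‖T x‖ ^ 2 = ∑ i, μ i * ‖b.repr x i‖ ^ 2 := by
    rw [← re_inner_adjoint_comp_self_apply, ← b.repr.inner_map_map, PiLp.inner_apply, map_sum]
    refine Finset.sum_congr rfl fun i _ => ?_
    rw [hT.eigenvectorBasis_apply_self_apply, RCLike.inner_apply, mul_assoc, RCLike.mul_conj, ← RCLike.ofReal_pow,
      ← RCLike.ofReal_mul, RCLike.ofReal_re]
  rw [← pow_le_pow_iff_left₀ (mul_nonneg (T.singularValues_nonneg _) (norm_nonneg x))
    (norm_nonneg _) two_ne_zero, mul_pow, T.sq_singularValues_of_lt rfl (by omega), hx, hTx,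
    Finset.mul_sum]
  exact Finset.sum_le_sum fun i _ => mul_le_mul_of_nonneg_right (hμ i) (by positivity)

theorem normDet_mul_norm_le (x : E) :
    T.normDet * ‖x‖ ≤ ‖T x‖ * ‖T.toContinuousLinearMap‖ ^ (finrank 𝕜 E - 1) := by
  by_cases h0 : finrank 𝕜 E = 0
  · have : Subsingleton E := finrank_zero_iff.mp h0
    simp [Subsingleton.elim x 0]
  obtain ⟨m, hm⟩ := Nat.exists_eq_add_one_of_ne_zero h0
  have hprod : ∏ i ∈ Finset.range m, T.singularValues i ≤ ‖T.toContinuousLinearMap‖ ^ m := by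
    simpa using Finset.prod_le_prod (s := Finset.range m) (fun i _ => T.singularValues_nonneg i)
      (fun i _ => T.singularValues_le_opNorm i)
  have hlast := T.singularValues_finrank_sub_one_mul_norm_le x
  rw [hm, Nat.add_sub_cancel] at hlast ⊢
  rw [normDet_eq_prod_singularValues, hm, Finset.prod_range_succ, mul_assoc, mul_comm]
  exact mul_le_mul hlast hprod (Finset.prod_nonneg fun i _ => T.singularValues_nonneg i)
    (norm_nonneg _)

end LinearMap

theorem Polynomial.Splits.exists_isRoot_norm_sub_pow_natDegree_le {K : Type*} [NormedField K]
    {p : K[X]} (hs : p.Splits) (hm : p.Monic) (hp : p.natDegree ≠ 0) (x : K) :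
    ∃ r, p.IsRoot r ∧ ‖x - r‖ ^ p.natDegree ≤ ‖p.eval x‖ := by
  classical
  have hcard : Multiset.card p.roots = p.natDegree := splits_iff_card_roots.mp hs
  have hne : p.roots.toFinset.Nonempty := by
    rw [Multiset.toFinset_nonempty, ← Multiset.card_pos, hcard]
    exact Nat.pos_of_ne_zero hp
  obtain ⟨r, hr, hmin⟩ := p.roots.toFinset.exists_min_image (fun r => ‖x - r‖) hne
  rw [Multiset.mem_toFinset] at hr
  refine ⟨r, isRoot_of_mem_roots hr, ?_⟩
  have hnorm : ‖p.eval x‖ = (p.roots.map fun s => ‖x - s‖).prod := by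
    rw [hs.eval_eq_prod_roots_of_monic hm]
    exact (map_multiset_prod (normHom : K →*₀ ℝ) _).trans (by rw [Multiset.map_map]; rfl)
  rw [hnorm, ← hcard, ← Multiset.prod_replicate, ← Multiset.map_const']
  exact Multiset.prod_map_le_prod_map₀ _ _ (fun _ _ => norm_nonneg _)
    fun s hs => hmin s (Multiset.mem_toFinset.mpr hs)

theorem Real.le_rpow_one_sub_one_div_mul_rpow_one_div {a b c : ℝ} {n : ℕ} (hn : n ≠ 0)
    (ha : 0 ≤ a) (hb : 0 ≤ b) (hc : 0 ≤ c) (h : a ^ n ≤ b ^ (n - 1) * c) :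
    a ≤ b ^ ((1 : ℝ) - 1 / n) * c ^ ((1 : ℝ) / n) := by
  have hn' : (n : ℝ) ≠ 0 := Nat.cast_ne_zero.mpr hn
  calc a = (a ^ n) ^ ((1 : ℝ) / n) := by rw [one_div, Real.pow_rpow_inv_natCast ha hn]
    _ ≤ (b ^ (n - 1) * c) ^ ((1 : ℝ) / n) := by gcongr
    _ = b ^ ((1 : ℝ) - 1 / n) * c ^ ((1 : ℝ) / n) := by
      rw [Real.mul_rpow (by positivity) hc, ← Real.rpow_natCast, ← Real.rpow_mul hb,
        Nat.cast_sub (Nat.one_le_iff_ne_zero.mpr hn), Nat.cast_one]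
      congr 2
      field_simp

namespace Matrix

variable {ι : Type*} [Fintype ι] [DecidableEq ι]

theorem det_sub_smul_one {R : Type*} [CommRing R] (A : Matrix ι ι R) (μ : R) :
    (A - μ • 1).det = (-1) ^ Fintype.card ι * A.charpoly.eval μ := by
  rw [eval_charpoly, ← det_neg, neg_sub, scalar_apply, smul_one_eq_diagonal]

variable {𝕜 : Type*} [RCLike 𝕜]

theorem norm_det_mul_norm_le (A : Matrix ι ι 𝕜) (x : EuclideanSpace 𝕜 ι) :
    ‖A.det‖ * ‖x‖ ≤ ‖toEuclideanCLM (n := ι) (𝕜 := 𝕜) A x‖ * ‖A‖ ^ (Fintype.card ι - 1) := by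
  have := (toEuclideanLin A).normDet_mul_norm_le x
  rwa [LinearMap.normDet_eq_norm_det, toEuclideanLin_eq_toLin_orthonormal, LinearMap.det_toLin,
    finrank_euclideanSpace] at this

theorem norm_sub_smul_one_le (A : Matrix ι ι 𝕜) (μ : 𝕜) : ‖A - μ • 1‖ ≤ ‖A‖ + ‖μ‖ := by
  have h1 : ‖(1 : Matrix ι ι 𝕜)‖ ≤ 1 := by
    rw [cstar_norm_def, map_one]
    exact ContinuousLinearMap.norm_id_le
  calc ‖A - μ • 1‖ ≤ ‖A‖ + ‖μ‖ * ‖(1 : Matrix ι ι 𝕜)‖ :=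
        (norm_sub_le _ _).trans (add_le_add_right (norm_smul_le _ _) _)
    _ ≤ ‖A‖ + ‖μ‖ := by gcongr; exact mul_le_of_le_one_right (norm_nonneg μ) h1

theorem exists_norm_eq_one_toEuclideanCLM_apply_eq_smul {A : Matrix ι ι 𝕜} {μ : 𝕜}
    (h : (A - μ • 1).det = 0) :
    ∃ z : EuclideanSpace 𝕜 ι, ‖z‖ = 1 ∧ toEuclideanCLM (n := ι) (𝕜 := 𝕜) A z = μ • z := by
  obtain ⟨v, hv0, hv⟩ := exists_mulVec_eq_zero_iff.mpr h
  rw [sub_mulVec, smul_mulVec, one_mulVec, sub_eq_zero] at hv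
  have hw : WithLp.toLp 2 v ≠ 0 := by simpa using hv0
  refine ⟨(‖WithLp.toLp 2 v‖⁻¹ : 𝕜) • WithLp.toLp 2 v, norm_smul_inv_norm hw, ?_⟩
  rw [map_smul, toEuclideanCLM_toLp, hv, smul_comm]
  rfl

theorem norm_det_sub_smul_one_le {A B : Matrix ι ι 𝕜} {μ : 𝕜} (h : (A - μ • 1).det = 0) :
    ‖(B - μ • 1).det‖ ≤ (‖A‖ + ‖B‖) ^ (Fintype.card ι - 1) * ‖A - B‖ := by
  obtain ⟨z, hz, hAz⟩ := exists_norm_eq_one_toEuclideanCLM_apply_eq_smul h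
  have hμ : ‖μ‖ ≤ ‖A‖ := by
    have := (toEuclideanCLM (n := ι) (𝕜 := 𝕜) A).le_opNorm z
    rwa [hAz, norm_smul, hz, mul_one, mul_one] at this
  have hBz : ‖toEuclideanCLM (n := ι) (𝕜 := 𝕜) (B - μ • 1) z‖ ≤ ‖A - B‖ := by
    have hdiff : toEuclideanCLM (n := ι) (𝕜 := 𝕜) (B - μ • 1) z =
        toEuclideanCLM (n := ι) (𝕜 := 𝕜) (B - A) z := by
      simp [hAz]
    have := (toEuclideanCLM (n := ι) (𝕜 := 𝕜) (B - A)).le_opNorm z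
    rwa [← hdiff, hz, mul_one, ← cstar_norm_def, norm_sub_rev] at this
  have hB : ‖B - μ • 1‖ ≤ ‖A‖ + ‖B‖ := by linarith [norm_sub_smul_one_le B μ]
  have hdet := norm_det_mul_norm_le (B - μ • 1) z
  rw [hz, mul_one] at hdet
  rw [mul_comm]
  exact hdet.trans (mul_le_mul hBz (pow_le_pow_left₀ (norm_nonneg _) hB _) (by positivity)
    (norm_nonneg _))

end Matrix

theorem spec_eq_l2_opNorm {ι κ : Type*} [Fintype ι] [Fintype κ] [DecidableEq κ]
    (A : Matrix ι κ ℂ) : spec A = ‖A‖ :=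
  rfl

/-- Elsner's theorem. -/
theorem stmt11 {n : ℕ} (hn : 0 < n) (C Ct : Matrix (Fin n) (Fin n) ℂ)
    (lam : ℂ) (hlam : (C - lam • 1).det = 0) :
    ∃ lt : ℂ, (Ct - lt • 1).det = 0 ∧
      ‖lam - lt‖ ≤
        (spec C + spec Ct) ^ ((1 : ℝ) - 1 / n) * spec (C - Ct) ^ ((1 : ℝ) / n) := by
  simp only [spec_eq_l2_opNorm]
  have hdeg : Ct.charpoly.natDegree = n := by
    rw [charpoly_natDegree_eq_dim, Fintype.card_fin]
  obtain ⟨lt, hroot, hlt⟩ :=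
    (IsAlgClosed.splits Ct.charpoly).exists_isRoot_norm_sub_pow_natDegree_le Ct.charpoly_monic
      (by rw [hdeg]; exact hn.ne') lam
  refine ⟨lt, by rw [det_sub_smul_one, hroot.eq_zero, mul_zero], ?_⟩
  refine Real.le_rpow_one_sub_one_div_mul_rpow_one_div hn.ne' (norm_nonneg _) (by positivity)
    (norm_nonneg _) ?_
  rw [hdeg] at hlt
  calc ‖lam - lt‖ ^ n ≤ ‖Ct.charpoly.eval lam‖ := hlt
    _ = ‖(Ct - lam • 1).det‖ := by simp [det_sub_smul_one]
    _ ≤ (‖C‖ + ‖Ct‖) ^ (n - 1) * ‖C - Ct‖ := by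
      simpa using norm_det_sub_smul_one_le (B := Ct) hlam
end
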